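/- arXiv:2011.06275 — 4 statements merged into one kernel-verified Lean document; each statement's English description precedes it below -/
import Mathlib

section
/- Fix γ ∈ (0,1) and ε > 0 with ε ≤ 1/(1-γ). Define b = ln((1-γ)ε)/ln(γ) + 1 and a loss sequence L_t = min(γ^{⌈b⌉ - t}, 1) · 1/(1-γ) for t ≥ 1. Then L_1 ≤ ε and for every t ≥ 1, L_t ≥ γ · min(ε/γ^{t-1}, 1/(1-γ)). -/
/-- Tightness construction for Theorem 1: the loss sequence
`L t = min (γ^(⌈b⌉ - t)) 1 * (1/(1-γ))` with `b = ln((1-γ)ε)/ln γ + 1`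
satisfies `L 1 ≤ ε` and matches the upper bound up to a factor of γ. -/
theorem eps_optimizer_deterioration_tightness (γ ε : ℝ) (hγ0 : 0 < γ)
    (hγ1 : γ < 1) (hε0 : 0 < ε) (hε1 : ε ≤ 1 / (1 - γ))
    (b : ℝ) (hb : b = Real.log ((1 - γ) * ε) / Real.log γ + 1)
    (L : ℕ → ℝ) (hL : ∀ t, L t = min (γ ^ (⌈b⌉ - (t : ℤ))) 1 * (1 / (1 - γ))) :
    L 1 ≤ ε ∧ ∀ t : ℕ, 1 ≤ t →
      γ * min (ε / γ ^ ((t : ℤ) - 1)) (1 / (1 - γ)) ≤ L t := by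
  have hγne : γ ≠ 0 := ne_of_gt hγ0
  have h1γ : (0:ℝ) < 1 - γ := by linarith
  have hc0 : 0 < (1 - γ) * ε := mul_pos h1γ hε0
  have hlog : Real.log γ ≠ 0 := ne_of_lt (Real.log_neg hγ0 hγ1)
  have hkey : γ ^ (b - 1) = (1 - γ) * ε := by
    have : b - 1 = Real.log ((1 - γ) * ε) / Real.log γ := by rw [hb]; ring
    rw [this, Real.rpow_def_of_pos hγ0, mul_comm, div_mul_cancel₀ _ hlog,
      Real.exp_log hc0]
  have haux : ∀ n : ℤ, γ ^ n = γ ^ (n : ℝ) := fun n => (Real.rpow_intCast γ n).symm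
  have hA : γ ^ (⌈b⌉ - 1 : ℤ) ≤ (1 - γ) * ε := by
    rw [haux]
    calc γ ^ ((⌈b⌉ - 1 : ℤ) : ℝ) ≤ γ ^ (b - 1) := by
          apply Real.rpow_le_rpow_of_exponent_ge hγ0 hγ1.le
          have := Int.le_ceil b; push_cast; linarith
      _ = (1 - γ) * ε := hkey
  have hB : (1 - γ) * ε ≤ γ ^ (⌈b⌉ - 2 : ℤ) := by
    rw [haux]
    calc (1 - γ) * ε = γ ^ (b - 1) := hkey.symm
      _ ≤ γ ^ ((⌈b⌉ - 2 : ℤ) : ℝ) := by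
          apply Real.rpow_le_rpow_of_exponent_ge hγ0 hγ1.le
          have := Int.ceil_lt_add_one b; push_cast; linarith
  constructor
  · rw [hL 1]
    calc min (γ ^ (⌈b⌉ - ((1:ℕ) : ℤ))) 1 * (1 / (1 - γ))
        ≤ γ ^ (⌈b⌉ - 1 : ℤ) * (1 / (1 - γ)) := by
          have : ((1:ℕ) : ℤ) = 1 := by norm_num
          rw [this]
          exact mul_le_mul_of_nonneg_right (min_le_left _ _) (by positivity)
      _ ≤ ((1 - γ) * ε) * (1 / (1 - γ)) :=
          mul_le_mul_of_nonneg_right hA (by positivity)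
      _ = ε := by field_simp
  · intro t ht
    rw [hL t]
    rcases le_or_gt ((t:ℤ)) ⌈b⌉ with h | h
    · -- RHS min is γ^(⌈b⌉-t)
      have hexp : (0:ℤ) ≤ ⌈b⌉ - (t:ℤ) := by omega
      have hle1 : γ ^ (⌈b⌉ - (t:ℤ)) ≤ 1 := by
        rw [haux]
        have h0 : (0:ℝ) ≤ ((⌈b⌉ - (t:ℤ) : ℤ) : ℝ) := by exact_mod_cast hexp
        calc γ ^ (((⌈b⌉ - (t:ℤ) : ℤ)) : ℝ) ≤ γ ^ (0:ℝ) :=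
              Real.rpow_le_rpow_of_exponent_ge hγ0 hγ1.le h0
          _ = 1 := Real.rpow_zero γ
      rw [min_eq_left hle1]
      have hεle : ε ≤ γ ^ (⌈b⌉ - 2 : ℤ) * (1 / (1 - γ)) := by
        rw [mul_one_div, le_div_iff₀ h1γ]
        nlinarith [hB]
      have hsplit : γ ^ (⌈b⌉ - (t:ℤ)) = γ ^ (⌈b⌉ - 2 : ℤ) * γ ^ ((2:ℤ) - t) := by
        rw [← zpow_add₀ hγne]; ring_nf
      have hmul : γ * (ε / γ ^ ((t:ℤ) - 1)) = ε * γ ^ ((2:ℤ) - t) := by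
        have h2 : γ ^ ((2:ℤ) - t) * γ ^ ((t:ℤ) - 1) = γ := by
          rw [← zpow_add₀ hγne]; norm_num
        have hz : γ ^ ((t:ℤ) - 1) ≠ 0 := zpow_ne_zero _ hγne
        field_simp
        nlinarith [h2]
      calc γ * min (ε / γ ^ ((t:ℤ) - 1)) (1 / (1 - γ))
          ≤ γ * (ε / γ ^ ((t:ℤ) - 1)) :=
            mul_le_mul_of_nonneg_left (min_le_left _ _) hγ0.le
        _ = ε * γ ^ ((2:ℤ) - t) := hmul
        _ ≤ (γ ^ (⌈b⌉ - 2 : ℤ) * (1 / (1 - γ))) * γ ^ ((2:ℤ) - t) :=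
            mul_le_mul_of_nonneg_right hεle (by positivity)
        _ = γ ^ (⌈b⌉ - (t:ℤ)) * (1 / (1 - γ)) := by rw [hsplit]; ring
    · -- RHS min is 1
      have h1le : (1:ℝ) ≤ γ ^ (⌈b⌉ - (t:ℤ)) := by
        rw [haux]
        have h0 : ((⌈b⌉ - (t:ℤ) : ℤ) : ℝ) ≤ 0 := by
          have : ⌈b⌉ - (t:ℤ) ≤ 0 := by omega
          exact_mod_cast this
        calc (1:ℝ) = γ ^ (0:ℝ) := (Real.rpow_zero γ).symm
          _ ≤ γ ^ (((⌈b⌉ - (t:ℤ) : ℤ)) : ℝ) :=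
              Real.rpow_le_rpow_of_exponent_ge hγ0 hγ1.le h0
      rw [min_eq_right h1le]
      calc γ * min (ε / γ ^ ((t:ℤ) - 1)) (1 / (1 - γ))
          ≤ 1 * (1 / (1 - γ)) := by
            apply mul_le_mul hγ1.le (min_le_right _ _) _ zero_le_one
            have : (0:ℝ) < ε / γ ^ ((t:ℤ) - 1) := by positivity
            positivity
        _ = 1 * (1 / (1 - γ)) := rfl
end

section
/- For all γ ∈ (0,1) and ε ∈ (0,1): (1/(1-γ) − 1/(1 − γ(1−ε))) ≤ 2·(1/(1-γ) − 1/(1 − γ(1−2ε))) whenever 2ε ≤ 1. That is, the loss 1/(1-γ) − 1/(1−γ(1−2ε)) realized by the lower-bound construction is within a factor of 2 of the upper bound with error ε. -/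
/-- Tightness (factor 2) for absolute belief error: the ε-error upper-bound term
is at most twice the loss realized by the 2ε lower-bound construction. -/
theorem belief_tightness_factor_two (γ ε : ℝ) (hγ0 : 0 < γ) (hγ1 : γ < 1)
    (hε0 : 0 < ε) (hε1 : ε < 1) (h2ε : 2 * ε ≤ 1) :
    1 / (1 - γ) - 1 / (1 - γ * (1 - ε)) ≤
      2 * (1 / (1 - γ) - 1 / (1 - γ * (1 - 2 * ε))) := by
  have h1 : (0:ℝ) < 1 - γ := by linarith
  have h2 : (0:ℝ) < 1 - γ * (1 - ε) := by nlinarith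
  have h3 : (0:ℝ) < 1 - γ * (1 - 2 * ε) := by nlinarith
  rw [div_sub_div _ _ (ne_of_gt h1) (ne_of_gt h2), div_sub_div _ _ (ne_of_gt h1) (ne_of_gt h3)]
  rw [mul_div_assoc', div_le_div_iff₀ (by positivity) (by positivity)]
  nlinarith [mul_pos hγ0 hε0, mul_pos h1 (mul_pos hγ0 hε0), mul_pos (mul_pos h1 h1) (mul_pos hγ0 hε0), sq_nonneg (γ*ε), mul_pos hγ0 (mul_pos hε0 hε0)]
end

section
/- Fix 0 < γ ≤ γ* < 1. Consider the optimization problem: maximize ∑_{t=1}^∞ (γ*)^{t-1} d_t over sequences (d_t) with d_t ∈ [−1,1] subject to ∑_{t=1}^∞ γ^{t-1} d_t ≤ 0 (all sums absolutely convergent). Then in any optimal solution the constraint ∑_{t=1}^∞ γ^{t-1} d_t ≤ 0 holds with equality. -/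
/-!
If the discounted constraint were slack, some term `γ^t d_t` would be negative, so `d_t < 1`.
Raising that single coordinate by a small `ε > 0` keeps the sequence in `[-1, 1]` and the
constraint satisfied, while it increases the objective by `(γ*)^t ε > 0`, contradicting optimality.
-/

open Function Set

theorem summable_pow_mul_of_abs_le_one {δ : ℝ} (hδ : |δ| < 1) {f : ℕ → ℝ}
    (hf : ∀ t, |f t| ≤ 1) : Summable fun t => δ ^ t * f t := by
  refine Summable.of_norm_bounded (summable_geometric_of_lt_one (abs_nonneg δ) hδ) fun t => ?_
  rw [norm_mul, norm_pow, Real.norm_eq_abs, Real.norm_eq_abs]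
  exact mul_le_of_le_one_right (by positivity) (hf t)

theorem exists_neg_of_tsum_neg {ι : Type*} {f : ι → ℝ} (hf : ∑' i, f i < 0) : ∃ i, f i < 0 := by
  by_contra! h
  exact hf.not_ge (tsum_nonneg h)

theorem HasSum.mul_update_add {ι : Type*} [DecidableEq ι] {c d : ι → ℝ} {S : ℝ}
    (h : HasSum (fun i => c i * d i) S) (i₀ : ι) (ε : ℝ) :
    HasSum (fun i => c i * Function.update d i₀ (d i₀ + ε) i) (S + c i₀ * ε) := by
  have hupd : (fun i => c i * Function.update d i₀ (d i₀ + ε) i)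
      = Function.update (fun i => c i * d i) i₀ (c i₀ * (d i₀ + ε)) := by
    funext i
    by_cases hi : i = i₀ <;> simp [hi]
  rw [hupd, show S + c i₀ * ε = c i₀ * (d i₀ + ε) - c i₀ * d i₀ + S by ring]
  exact h.update i₀ _

theorem exists_feasible_improvement_of_slack {γ γ' : ℝ} (hγ0 : 0 < γ) (hγ1 : γ < 1)
    (hγ'0 : 0 < γ') (hγ'1 : γ' < 1) {d : ℕ → ℝ} (hd : ∀ t, d t ∈ Icc (-1 : ℝ) 1)
    (hslack : ∑' t, γ ^ t * d t < 0) :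
    ∃ d' : ℕ → ℝ, (∀ t, d' t ∈ Icc (-1 : ℝ) 1) ∧ ∑' t, γ ^ t * d' t ≤ 0 ∧
      ∑' t, γ' ^ t * d t < ∑' t, γ' ^ t * d' t := by
  have hsummable : ∀ {δ : ℝ}, 0 < δ → δ < 1 → Summable fun t => δ ^ t * d t :=
    fun hδ0 hδ1 => summable_pow_mul_of_abs_le_one (abs_lt.mpr ⟨by linarith, hδ1⟩)
      fun t => abs_le.mpr (hd t)
  set S := ∑' t, γ ^ t * d t
  obtain ⟨t₀, ht₀⟩ := exists_neg_of_tsum_neg hslack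
  have hpow : 0 < γ ^ t₀ := pow_pos hγ0 t₀
  have hdt₀ : d t₀ < 0 := neg_of_mul_neg_right ht₀ hpow.le
  set ε := min (1 - d t₀) (-S / γ ^ t₀)
  have hε0 : 0 < ε := lt_min (by linarith) (div_pos (neg_pos.mpr hslack) hpow)
  have hεS : γ ^ t₀ * ε ≤ -S := by
    rw [mul_comm, ← le_div_iff₀ hpow]
    exact min_le_right _ _
  refine ⟨update d t₀ (d t₀ + ε), ?_, ?_, ?_⟩
  · refine forall_update_iff d (p := fun t x => x ∈ Icc (-1 : ℝ) 1) |>.mpr ⟨?_, fun t _ => hd t⟩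
    exact ⟨by linarith [(hd t₀).1], by linarith [min_le_left (1 - d t₀) (-S / γ ^ t₀)]⟩
  · rw [((hsummable hγ0 hγ1).hasSum.mul_update_add t₀ ε).tsum_eq]
    linarith
  · rw [((hsummable hγ'0 hγ'1).hasSum.mul_update_add t₀ ε).tsum_eq]
    linarith [mul_pos (pow_pos hγ'0 t₀) hε0]

/-- Indexing starts at `0`: `d t` is the paper's `d_{t+1}`. -/
theorem impatient_lp_constraint_tight (γ γstar : ℝ) (hγ0 : 0 < γ)
    (hγ : γ ≤ γstar) (hγstar : γstar < 1) (d : ℕ → ℝ)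
    (hd : ∀ t, d t ∈ Set.Icc (-1 : ℝ) 1)
    (hfeas : (∑' t : ℕ, γ ^ t * d t) ≤ 0)
    (hopt : ∀ d' : ℕ → ℝ, (∀ t, d' t ∈ Set.Icc (-1 : ℝ) 1) →
      (∑' t : ℕ, γ ^ t * d' t) ≤ 0 →
      (∑' t : ℕ, γstar ^ t * d' t) ≤ ∑' t : ℕ, γstar ^ t * d t) :
    (∑' t : ℕ, γ ^ t * d t) = 0 := by
  by_contra hne
  obtain ⟨d', hd', hfeas', hbetter⟩ :=
    exists_feasible_improvement_of_slack hγ0 (hγ.trans_lt hγstar) (hγ0.trans_le hγ) hγstar hd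
      (hfeas.lt_of_ne hne)
  exact (hopt d' hd' hfeas').not_gt hbetter
end

section
/- Fix γ ∈ (0,1) and let k = ⌈−1/log₂ γ⌉. Define d_t = −1 for t < k, d_t = 1 for t > k, and d_k = −(γ^k + γ^{k-1} − 1)/(γ^{k-1}(1−γ)). Then d_k ∈ [−1,1] and ∑_{t=1}^∞ γ^{t-1} d_t = 0. -/
/-- The explicit optimal solution of the impatient-agent LP: with
`k = ⌈-1/log₂ γ⌉`, the threshold sequence (indexed so that `d t` is the value
at time `t`, `t ≥ 1`) has `d k ∈ [-1,1]` and makes the discounted constraint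
exactly binding. -/
theorem impatient_lp_optimal_solution (γ : ℝ) (hγ0 : 0 < γ) (hγ1 : γ < 1)
    (k : ℕ) (hk : k = ⌈-1 / Real.logb 2 γ⌉₊)
    (d : ℕ → ℝ)
    (hd : d = fun t => if t < k then -1
      else if t = k then -(γ ^ k + γ ^ (k - 1) - 1) / (γ ^ (k - 1) * (1 - γ))
      else 1) :
    d k ∈ Set.Icc (-1 : ℝ) 1 ∧ (∑' t : ℕ, γ ^ t * d (t + 1)) = 0 := by
  have hL : Real.logb 2 γ < 0 := Real.logb_neg (by norm_num) hγ0 hγ1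
  have hx : 0 < -1 / Real.logb 2 γ := div_pos_of_neg_of_neg (by norm_num) hL
  have hk1 : 1 ≤ k := by
    rw [hk]
    exact Nat.one_le_ceil_iff.mpr hx
  obtain ⟨K, rfl⟩ : ∃ K, k = K + 1 := ⟨k - 1, by omega⟩
  have hlog2 : (0:ℝ) < Real.log 2 := Real.log_pos (by norm_num)
  -- γ^(K+1) ≤ 1/2
  have hup : γ ^ (K + 1) ≤ 1 / 2 := by
    have h1 : -1 / Real.logb 2 γ ≤ (K + 1 : ℝ) := by
      have := Nat.le_ceil (-1 / Real.logb 2 γ)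
      rw [← hk] at this
      exact_mod_cast this
    have h2 : ((K:ℝ) + 1) * Real.logb 2 γ ≤ -1 :=
      (div_le_iff_of_neg hL).mp h1
    have h3 : ((K:ℝ) + 1) * Real.log γ ≤ -Real.log 2 := by
      rw [Real.logb] at h2
      have he : ((K:ℝ) + 1) * (Real.log γ / Real.log 2) * Real.log 2
          = ((K:ℝ) + 1) * Real.log γ := by field_simp
      nlinarith [mul_le_mul_of_nonneg_right h2 hlog2.le]
    have h4 : Real.log (γ ^ (K + 1)) ≤ Real.log (1 / 2) := by
      rw [Real.log_pow, Real.log_div (by norm_num) (by norm_num), Real.log_one]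
      push_cast
      linarith
    exact (Real.log_le_log_iff (pow_pos hγ0 _) (by norm_num)).mp h4
  -- 1/2 < γ^K
  have hlo : 1 / 2 < γ ^ K := by
    have h1 : (K : ℝ) < -1 / Real.logb 2 γ := by
      have : K < ⌈-1 / Real.logb 2 γ⌉₊ := by omega
      exact Nat.lt_ceil.mp this
    have h2 : -1 < (K:ℝ) * Real.logb 2 γ := (lt_div_iff_of_neg hL).mp h1
    have h3 : -Real.log 2 < (K:ℝ) * Real.log γ := by
      rw [Real.logb] at h2
      have he : (K:ℝ) * (Real.log γ / Real.log 2) * Real.log 2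
          = (K:ℝ) * Real.log γ := by field_simp
      nlinarith [mul_lt_mul_of_pos_right h2 hlog2]
    have h4 : Real.log (1 / 2) < Real.log (γ ^ K) := by
      rw [Real.log_pow, Real.log_div (by norm_num) (by norm_num), Real.log_one]
      push_cast
      linarith
    exact (Real.log_lt_log_iff (by norm_num) (pow_pos hγ0 _)).mp h4
  have hγK : (0:ℝ) < γ ^ K := pow_pos hγ0 _
  have h1γ : (0:ℝ) < 1 - γ := by linarith
  have hpow : γ ^ (K + 1) = γ ^ K * γ := by ring
  have hdk : d (K + 1) = -(γ ^ (K+1) + γ ^ K - 1) / (γ ^ K * (1 - γ)) := by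
    rw [hd]
    simp
  constructor
  · rw [hdk]
    have hB : (0:ℝ) < γ ^ K * (1 - γ) := mul_pos hγK h1γ
    constructor
    · rw [le_div_iff₀ hB]
      nlinarith [hup]
    · rw [div_le_iff₀ hB]
      nlinarith [hlo]
  · have hfe : (fun t : ℕ => γ ^ t * d (t + 1)) =
        fun t => γ ^ t + (if t ∈ Finset.range (K + 1) then γ ^ t * (d (t + 1) - 1) else 0) := by
      funext t
      simp only [Finset.mem_range]
      rcases lt_trichotomy t K with h1 | h1 | h1
      · have hdv : d (t + 1) = -1 := by
          simp only [hd]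
          rw [if_pos (by omega : t + 1 < K + 1)]
        rw [hdv, if_pos (by omega)]; ring
      · subst h1
        rw [if_pos (by omega)]; ring
      · have hdv : d (t + 1) = 1 := by
          simp only [hd]
          rw [if_neg (by omega), if_neg (by omega)]
        rw [hdv, if_neg (by omega)]; ring
    rw [hfe]
    have hs1 : Summable (fun t : ℕ => γ ^ t) :=
      summable_geometric_of_lt_one hγ0.le hγ1
    have hs2 : Summable (fun t : ℕ =>
        if t ∈ Finset.range (K + 1) then γ ^ t * (d (t + 1) - 1) else 0) :=
      summable_of_ne_finset_zero (s := Finset.range (K + 1)) (fun t ht => if_neg ht)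
    rw [Summable.tsum_add hs1 hs2, tsum_geometric_of_lt_one hγ0.le hγ1,
      tsum_eq_sum (s := Finset.range (K + 1)) (fun t ht => if_neg ht)]
    have hsum : ∑ t ∈ Finset.range (K + 1),
        (if t ∈ Finset.range (K + 1) then γ ^ t * (d (t + 1) - 1) else 0) =
        ∑ t ∈ Finset.range (K + 1), γ ^ t * (d (t + 1) - 1) :=
      Finset.sum_congr rfl (fun t ht => if_pos ht)
    rw [hsum, Finset.sum_range_succ, hdk]
    have hsum2 : ∑ t ∈ Finset.range K, γ ^ t * (d (t + 1) - 1) =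
        ∑ t ∈ Finset.range K, (-2) * γ ^ t := by
      refine Finset.sum_congr rfl (fun t ht => ?_)
      have hlt : t < K := Finset.mem_range.mp ht
      have hdv : d (t + 1) = -1 := by
        simp only [hd]
        rw [if_pos (by omega : t + 1 < K + 1)]
      rw [hdv]; ring
    rw [hsum2, ← Finset.mul_sum, geom_sum_eq hγ1.ne]
    have hne1 : (1:ℝ) - γ ≠ 0 := h1γ.ne'
    have hne2 : γ - 1 ≠ 0 := sub_ne_zero.mpr hγ1.ne
    have hne3 : γ ^ K ≠ 0 := hγK.ne'
    field_simp
    ring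
end
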